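/- arXiv:2209.07750 — 3 statements merged into one kernel-verified Lean document; each statement's English description precedes it below -/
import Mathlib

section
/- Angle inductive bound: let $S, T$ be $d\times d$ real matrices with $S$ invertible, let $x, y$ be unit vectors and $\varphi > 0$ with $Sy\varphi + Tx \ne 0$ and $Sx \ne 0$. Then $\delta\big(Sx,\ Sy\varphi + Tx\big) \le \delta(Sx, Tx)\,\frac{\|Tx\|_2}{\|Sy\varphi + Tx\|_2} + \delta(x,y)\,\frac{\varphi}{\|Sy\varphi + Tx\|_2}\cdot\frac{\|\wedge^2 S\|_2}{\|Sx\|_2}$, where $\|\wedge^2 S\|_2$ is the operator norm of the induced map on $\bigwedge^2 \mathbb{R}^d$ and $\delta(u,v) = \|u\wedge v\|_2/(\|u\|_2\|v\|_2)$. -/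
/-!
For `u ≠ 0`, `‖u ∧ v‖ = ‖u‖ · ‖v - proj_u v‖`, and `v ↦ v - proj_u v` is linear, so
`v ↦ ‖u ∧ v‖` is a seminorm. Hence
`‖Sx ∧ (φ Sy + Tx)‖ ≤ φ ‖Sx ∧ Sy‖ + ‖Sx ∧ Tx‖ ≤ φ ‖∧²S‖ ‖x ∧ y‖ + ‖Sx ∧ Tx‖`,
and dividing by `‖Sx‖ ‖φ Sy + Tx‖` gives the bound.
-/

open RealInnerProductSpace

section WedgeNorm

variable {E : Type*} [NormedAddCommGroup E] [InnerProductSpace ℝ E]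

/-- The norm `‖u ∧ v‖₂` of the wedge product, through the Gram determinant. -/
noncomputable def wedgeNorm (u v : E) : ℝ :=
  Real.sqrt (‖u‖ ^ 2 * ‖v‖ ^ 2 - (inner ℝ u v : ℝ) ^ 2)

@[simp]
lemma wedgeNorm_zero_right (u : E) : wedgeNorm u 0 = 0 := by
  simp [wedgeNorm]

lemma wedgeNorm_eq_norm_mul_norm_sub_proj (u v : E) :
    wedgeNorm u v = ‖u‖ * ‖v - (⟪u, v⟫ / ‖u‖ ^ 2) • u‖ := by
  rcases eq_or_ne u 0 with rfl | hu
  · simp [wedgeNorm]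
  have hu0 : 0 < ‖u‖ := norm_pos_iff.mpr hu
  have hsq : ‖v - (⟪u, v⟫ / ‖u‖ ^ 2) • u‖ ^ 2 = ‖v‖ ^ 2 - ⟪u, v⟫ ^ 2 / ‖u‖ ^ 2 := by
    rw [norm_sub_sq_real, real_inner_smul_right, norm_smul, real_inner_comm, mul_pow,
      Real.norm_eq_abs, sq_abs]
    field_simp
    ring
  rw [wedgeNorm, ← Real.sqrt_sq (by positivity : 0 ≤ ‖u‖ * ‖v - (⟪u, v⟫ / ‖u‖ ^ 2) • u‖),
    mul_pow, hsq]
  congr 1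
  field_simp

lemma wedgeNorm_add_right_le (u v v' : E) :
    wedgeNorm u (v + v') ≤ wedgeNorm u v + wedgeNorm u v' := by
  simp only [wedgeNorm_eq_norm_mul_norm_sub_proj, ← mul_add]
  gcongr
  calc ‖v + v' - (⟪u, v + v'⟫ / ‖u‖ ^ 2) • u‖
      = ‖(v - (⟪u, v⟫ / ‖u‖ ^ 2) • u) + (v' - (⟪u, v'⟫ / ‖u‖ ^ 2) • u)‖ := by
        rw [inner_add_right, add_div, add_smul]
        abel_nf
    _ ≤ _ := norm_add_le _ _

lemma wedgeNorm_smul_right (u v : E) (c : ℝ) :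
    wedgeNorm u (c • v) = |c| * wedgeNorm u v := by
  rw [wedgeNorm_eq_norm_mul_norm_sub_proj, wedgeNorm_eq_norm_mul_norm_sub_proj,
    real_inner_smul_right, mul_div_assoc, mul_smul, ← smul_sub, norm_smul, Real.norm_eq_abs]
  ring

lemma wedgeNorm_smul_add_le (u v v' : E) {c : ℝ} (hc : 0 ≤ c) :
    wedgeNorm u (c • v + v') ≤ c * wedgeNorm u v + wedgeNorm u v' := by
  simpa [wedgeNorm_smul_right, abs_of_nonneg hc] using wedgeNorm_add_right_le u (c • v) v'

/-- At `v = 0` both sides vanish, through `x / 0 = 0`. -/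
lemma wedgeNorm_div_mul_norm_right (u v : E) :
    wedgeNorm u v / (‖u‖ * ‖v‖) * ‖v‖ = wedgeNorm u v / ‖u‖ := by
  rcases eq_or_ne v 0 with rfl | hv
  · simp
  have hv0 : ‖v‖ ≠ 0 := norm_ne_zero_iff.mpr hv
  rw [div_mul_eq_mul_div, mul_div_mul_right _ _ hv0]

end WedgeNorm

theorem stmt_11_general (d : ℕ)
    (S T : EuclideanSpace ℝ (Fin d) →L[ℝ] EuclideanSpace ℝ (Fin d))
    (x y : EuclideanSpace ℝ (Fin d)) (hx : ‖x‖ = 1) (hy : ‖y‖ = 1)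
    (φ : ℝ) (hφ : 0 < φ)
    (w : EuclideanSpace ℝ (Fin d) → EuclideanSpace ℝ (Fin d) → ℝ)
    (hw : ∀ u v, w u v = Real.sqrt (‖u‖ ^ 2 * ‖v‖ ^ 2 - (inner ℝ u v : ℝ) ^ 2))
    (δ : EuclideanSpace ℝ (Fin d) → EuclideanSpace ℝ (Fin d) → ℝ)
    (hδ : ∀ u v, δ u v = w u v / (‖u‖ * ‖v‖))
    (Λ : ℝ) (hΛ : ∀ u v, w (S u) (S v) ≤ Λ * w u v) :
    δ (S x) (φ • S y + T x)
      ≤ δ (S x) (T x) * (‖T x‖ / ‖φ • S y + T x‖)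
        + δ x y * (φ / ‖φ • S y + T x‖) * (Λ / ‖S x‖) := by
  obtain rfl : w = wedgeNorm := funext₂ hw
  have hwedge :
      wedgeNorm (S x) (φ • S y + T x) ≤ wedgeNorm (S x) (T x) + φ * (Λ * wedgeNorm x y) :=
    calc wedgeNorm (S x) (φ • S y + T x)
        ≤ φ * wedgeNorm (S x) (S y) + wedgeNorm (S x) (T x) :=
          wedgeNorm_smul_add_le _ _ _ hφ.le
      _ ≤ φ * (Λ * wedgeNorm x y) + wedgeNorm (S x) (T x) := by gcongr; exact hΛ x y
      _ = _ := add_comm _ _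
  calc δ (S x) (φ • S y + T x)
      ≤ (wedgeNorm (S x) (T x) + φ * (Λ * wedgeNorm x y)) / (‖S x‖ * ‖φ • S y + T x‖) := by
        rw [hδ]; gcongr
    _ = _ := by
        rw [hδ, hδ, hx, hy, mul_div_assoc', wedgeNorm_div_mul_norm_right, div_div]
        ring

/-- angle inductive bound.  Here `w u v = ‖u ∧ v‖₂` is the wedge norm,
`δ u v = w u v / (‖u‖ ‖v‖)` the sine-distance, and `Λ` is (an upper bound for)
the operator norm `‖∧²S‖₂` of the induced map on `⋀² ℝᵈ`, characterised by
`w (S u) (S v) ≤ Λ · w u v`. -/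
theorem stmt_11 (d : ℕ)
    (S T : EuclideanSpace ℝ (Fin d) →L[ℝ] EuclideanSpace ℝ (Fin d))
    (hSinj : Function.Injective S)
    (x y : EuclideanSpace ℝ (Fin d)) (hx : ‖x‖ = 1) (hy : ‖y‖ = 1)
    (φ : ℝ) (hφ : 0 < φ)
    (hne : φ • S y + T x ≠ 0) (hSx : S x ≠ 0)
    (w : EuclideanSpace ℝ (Fin d) → EuclideanSpace ℝ (Fin d) → ℝ)
    (hw : ∀ u v, w u v = Real.sqrt (‖u‖ ^ 2 * ‖v‖ ^ 2 - (inner ℝ u v : ℝ) ^ 2))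
    (δ : EuclideanSpace ℝ (Fin d) → EuclideanSpace ℝ (Fin d) → ℝ)
    (hδ : ∀ u v, δ u v = w u v / (‖u‖ * ‖v‖))
    (Λ : ℝ) (hΛ : ∀ u v, w (S u) (S v) ≤ Λ * w u v) :
    δ (S x) (φ • S y + T x)
      ≤ δ (S x) (T x) * (‖T x‖ / ‖φ • S y + T x‖)
        + δ x y * (φ / ‖φ • S y + T x‖) * (Λ / ‖S x‖) :=
  stmt_11_general d S T x y hx hy φ hφ w hw δ hδ Λ hΛ
end

section
/- Trace criterion: let $\{(A_n, B_n)\}$ be i.i.d. with $A_n$ invertible, and $T_n$ the first derived product. If $\mathbb{E}[\operatorname{tr}(B_1 A_1^{-1})] \ne 0$ (and $\operatorname{tr}(B_1A_1^{-1})$ is integrable), then $\mathbb{P}(T_n = 0 \text{ infinitely often}) = 0$. -/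
/-!
`T n * (S n)⁻¹` satisfies `Tₙ₊₁Sₙ₊₁⁻¹ = Bₙ₊₁Aₙ₊₁⁻¹ + Aₙ₊₁(TₙSₙ⁻¹)Aₙ₊₁⁻¹`, so by conjugation
invariance of the trace, `tr(TₙSₙ⁻¹) = ∑ᵢ₌₁ⁿ tr(BᵢAᵢ⁻¹)` is a random walk with i.i.d. integrable
increments of nonzero mean. By the strong law of large numbers it returns to `0` only finitely
often almost surely, while `Tₙ = 0` forces it to vanish.
-/

open MeasureTheory ProbabilityTheory Filter Finset Function

namespace Matrix

variable {ι K : Type*} [Fintype ι] [DecidableEq ι] [CommRing K] {A B S T : ℕ → Matrix ι ι K}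

theorem isUnit_of_succ_eq_mul (hA : ∀ n, IsUnit (A (n + 1))) (hS0 : S 0 = 1)
    (hS : ∀ n, S (n + 1) = A (n + 1) * S n) (n : ℕ) : IsUnit (S n) := by
  induction n with
  | zero => exact hS0 ▸ isUnit_one
  | succ k ih => exact hS k ▸ (hA k).mul ih

theorem derived_mul_inv_succ {n : ℕ} (hS : IsUnit (S n))
    (hSn : S (n + 1) = A (n + 1) * S n) (hTn : T (n + 1) = B (n + 1) * S n + A (n + 1) * T n) :
    T (n + 1) * (S (n + 1))⁻¹ =
      B (n + 1) * (A (n + 1))⁻¹ + A (n + 1) * (T n * (S n)⁻¹) * (A (n + 1))⁻¹ := by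
  rw [hTn, hSn, mul_inv_rev, add_mul, Matrix.mul_assoc, ← Matrix.mul_assoc (S n),
    mul_nonsing_inv _ ((isUnit_iff_isUnit_det _).1 hS), Matrix.one_mul]
  noncomm_ring

theorem trace_derived_mul_inv (hA : ∀ n, IsUnit (A (n + 1))) (hS0 : S 0 = 1)
    (hS : ∀ n, S (n + 1) = A (n + 1) * S n) (hT0 : T 0 = 0)
    (hT : ∀ n, T (n + 1) = B (n + 1) * S n + A (n + 1) * T n) (n : ℕ) :
    (T n * (S n)⁻¹).trace = ∑ i ∈ range n, (B (i + 1) * (A (i + 1))⁻¹).trace := by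
  induction n with
  | zero => simp [hT0]
  | succ k ih =>
    rw [derived_mul_inv_succ (isUnit_of_succ_eq_mul hA hS0 hS k) (hS k) (hT k), trace_add,
      trace_mul_cycle, nonsing_inv_mul _ ((isUnit_iff_isUnit_det _).1 (hA k)), Matrix.one_mul,
      ih, sum_range_succ, add_comm]

end Matrix

theorem measurable_trace_snd_mul_inv_fst (ι : Type*) [Fintype ι] [DecidableEq ι] :
    Measurable fun p : (ι → ι → ℝ) × (ι → ι → ℝ) => (Matrix.of p.2 * (Matrix.of p.1)⁻¹).trace := by
  -- `A⁻¹ = (det A)⁻¹ • adj A`; the inverse is discontinuous only through the scalar `(det A)⁻¹`.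
  simp only [Matrix.inv_def, Matrix.mul_smul, Matrix.trace_smul, smul_eq_mul, Ring.inverse_eq_inv]
  have hdet : Continuous fun p : (ι → ι → ℝ) × (ι → ι → ℝ) => (Matrix.of p.1).det :=
    continuous_fst.matrix_det
  have htr : Continuous fun p : (ι → ι → ℝ) × (ι → ι → ℝ) =>
      (Matrix.of p.2 * (Matrix.of p.1).adjugate).trace :=
    (continuous_snd.matrix_mul continuous_fst.matrix_adjugate).matrix_trace
  exact hdet.measurable.inv.mul htr.measurable

theorem measure_frequently_sum_range_eq_zero {Ω : Type*} {m : MeasurableSpace Ω} {μ : Measure Ω}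
    (X : ℕ → Ω → ℝ) (hint : Integrable (X 0) μ) (hindep : Pairwise ((· ⟂ᵢ[μ] ·) on X))
    (hident : ∀ i, IdentDistrib (X i) (X 0) μ μ) (hdrift : μ[X 0] ≠ 0) :
    μ {ω | ∃ᶠ n in atTop, ∑ i ∈ range n, X i ω = 0} = 0 := by
  have hne : ∀ᵐ ω ∂μ, ∀ᶠ n in atTop, ∑ i ∈ range n, X i ω ≠ 0 :=
    (strong_law_ae_real X hint hindep hident).mono fun ω hω =>
      (hω.eventually_ne hdrift).mono fun n hn hsum => hn (by rw [hsum, zero_div])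
  simpa only [ae_iff, not_eventually, not_not] using hne

theorem stmt_16_general (d : ℕ) (Ω : Type*) [MeasureSpace Ω]
    (A B : ℕ → Ω → Matrix (Fin d) (Fin d) ℝ)
    (hAinv : ∀ n ω, IsUnit (A n ω))
    (f : ℕ → Ω → (Fin d → Fin d → ℝ) × (Fin d → Fin d → ℝ))
    (hf : ∀ n ω, f n ω = (A (n + 1) ω, B (n + 1) ω))
    (hindep : iIndepFun f ℙ)
    (hid : ∀ n, IdentDistrib (f n) (f 0) ℙ ℙ)
    (S T : ℕ → Ω → Matrix (Fin d) (Fin d) ℝ)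
    (hS0 : ∀ ω, S 0 ω = 1) (hS : ∀ n ω, S (n + 1) ω = A (n + 1) ω * S n ω)
    (hT0 : ∀ ω, T 0 ω = 0)
    (hT : ∀ n ω, T (n + 1) ω = B (n + 1) ω * S n ω + A (n + 1) ω * T n ω)
    (hint : Integrable (fun ω => (B 1 ω * (A 1 ω)⁻¹).trace) ℙ)
    (hne : (∫ ω, (B 1 ω * (A 1 ω)⁻¹).trace ∂ℙ) ≠ 0) :
    ℙ {ω | ∀ m, ∃ n, m ≤ n ∧ T n ω = 0} = 0 := by
  have hφ := measurable_trace_snd_mul_inv_fst (Fin d)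
  set X : ℕ → Ω → ℝ := fun n ω => (Matrix.of (f n ω).2 * (Matrix.of (f n ω).1)⁻¹).trace
  have hX : ∀ n ω, X n ω = (B (n + 1) ω * (A (n + 1) ω)⁻¹).trace := fun n ω => by
    simp only [X, hf]; rfl
  have hX0 : X 0 = fun ω => (B 1 ω * (A 1 ω)⁻¹).trace := funext (hX 0)
  have hwalk := measure_frequently_sum_range_eq_zero X (hX0 ▸ hint)
    (fun i j hij => (hindep.indepFun hij).comp hφ hφ) (fun i => (hid i).comp hφ) (hX0 ▸ hne)
  refine measure_mono_null (fun ω hω => ?_) hwalk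
  simp only [Set.mem_ofPred_eq, ← frequently_atTop] at hω ⊢
  refine hω.mono fun n hTn => ?_
  simp only [hX, ← Matrix.trace_derived_mul_inv (A := (A · ω)) (B := (B · ω)) (S := (S · ω))
    (T := (T · ω)) (fun n => hAinv (n + 1) ω) (hS0 ω) (fun n => hS n ω) (hT0 ω) (fun n => hT n ω),
    hTn, Matrix.zero_mul, Matrix.trace_zero]

/-- trace criterion.  For an i.i.d. sequence of pairs `(Aₙ, Bₙ)` with
`Aₙ` invertible, if `tr(B₁A₁⁻¹)` is integrable with `𝔼[tr(B₁A₁⁻¹)] ≠ 0`, then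
almost surely `Tₙ = 0` occurs only finitely often. -/
theorem stmt_16 (d : ℕ) (Ω : Type*) [MeasureSpace Ω]
    [IsProbabilityMeasure (ℙ : Measure Ω)]
    (A B : ℕ → Ω → Matrix (Fin d) (Fin d) ℝ)
    (hAinv : ∀ n ω, IsUnit (A n ω))
    (f : ℕ → Ω → (Fin d → Fin d → ℝ) × (Fin d → Fin d → ℝ))
    (hf : ∀ n ω, f n ω = (A (n + 1) ω, B (n + 1) ω))
    (hmeas : ∀ n, Measurable (f n))
    (hindep : iIndepFun f ℙ)
    (hid : ∀ n, IdentDistrib (f n) (f 0) ℙ ℙ)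
    (S T : ℕ → Ω → Matrix (Fin d) (Fin d) ℝ)
    (hS0 : ∀ ω, S 0 ω = 1) (hS : ∀ n ω, S (n + 1) ω = A (n + 1) ω * S n ω)
    (hT0 : ∀ ω, T 0 ω = 0)
    (hT : ∀ n ω, T (n + 1) ω = B (n + 1) ω * S n ω + A (n + 1) ω * T n ω)
    (hint : Integrable (fun ω => (B 1 ω * (A 1 ω)⁻¹).trace) ℙ)
    (hne : (∫ ω, (B 1 ω * (A 1 ω)⁻¹).trace ∂ℙ) ≠ 0) :
    ℙ {ω | ∀ m, ∃ n, m ≤ n ∧ T n ω = 0} = 0 :=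
  stmt_16_general d Ω A B hAinv f hf hindep hid S T hS0 hS hT0 hT hint hne
end

section
/- Diagonal counterexample: let $A_n = \operatorname{diag}(\alpha, \beta)$ with $\alpha > \beta > 0$ and $B_n = \begin{pmatrix}0 & -1\\ 1 & 0\end{pmatrix}$ for all $n$. Then $S_{n+1} = \operatorname{diag}(\alpha^{n+1}, \beta^{n+1})$ and the first derived product satisfies $T_{n+1} = \begin{pmatrix} 0 & -\sum_{i=0}^n \alpha^{n-i}\beta^i \\ \sum_{i=0}^n \beta^{n-i}\alpha^i & 0\end{pmatrix}$. Consequently, for the standard basis vectors, $\frac{1}{n}\frac{\|T_{n+1}e_1\|_2}{\|S_{n+1}e_1\|_2} \to 0$ and $\frac{1}{n}\frac{\|T_{n+1}e_2\|_2}{\|S_{n+1}e_2\|_2} \to \infty$ as $n \to \infty$. -/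
/-!
Here `Sₙ = diag(αⁿ, βⁿ)` and the off-diagonal entries of `Tₙ₊₁` are the complete homogeneous
sums `hₙ(α, β) = ∑ αⁿ⁻ⁱβⁱ`, with `(α - β) hₙ(α, β) = αⁿ⁺¹ - βⁿ⁺¹`. Against `e₁` the ratio is
`hₙ/αⁿ⁺¹ ≤ 1/(α - β)`, bounded, so it is `o(n)`; against `e₂` it is `hₙ/βⁿ⁺¹ ≥ (α/β)ⁿ/β`,
which grows exponentially, hence faster than `n`.
-/

open Filter Finset Matrix

def geomSum₂ {R : Type*} [CommSemiring R] (a b : R) (n : ℕ) : R :=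
  ∑ i ∈ range (n + 1), a ^ (n - i) * b ^ i

section GeomSum

variable {R : Type*} [CommRing R] (a b : R) (n : ℕ)

theorem geomSum₂_zero : geomSum₂ a b 0 = 1 := by simp [geomSum₂]

theorem geomSum₂_succ : geomSum₂ a b (n + 1) = a * geomSum₂ a b n + b ^ (n + 1) := by
  simpa [geomSum₂, mul_comm, add_comm] using geom_sum₂_succ_eq b a (n := n + 1)

theorem geomSum₂_comm : geomSum₂ a b n = geomSum₂ b a n := by
  simpa [geomSum₂, mul_comm] using geom_sum₂_comm b a (n + 1)

theorem geomSum₂_mul_sub : geomSum₂ a b n * (a - b) = a ^ (n + 1) - b ^ (n + 1) := by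
  have h := geom_sum₂_mul b a (n + 1)
  simp only [Nat.add_sub_cancel] at h
  simp only [geomSum₂, mul_comm (a ^ _)]
  linear_combination -h

end GeomSum

section Ordered

variable {R : Type*} [CommRing R] [LinearOrder R] [IsStrictOrderedRing R] {a b : R}

theorem geomSum₂_nonneg (ha : 0 ≤ a) (hb : 0 ≤ b) (n : ℕ) : 0 ≤ geomSum₂ a b n :=
  sum_nonneg fun _ _ => by positivity

theorem pow_le_geomSum₂ (ha : 0 ≤ a) (hb : 0 ≤ b) (n : ℕ) : a ^ n ≤ geomSum₂ a b n := by
  simpa [geomSum₂] using single_le_sum (f := fun i => a ^ (n - i) * b ^ i)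
    (fun _ _ => by positivity) (mem_range.2 n.succ_pos)

theorem geomSum₂_mul_sub_le (hb : 0 ≤ b) (n : ℕ) : geomSum₂ a b n * (a - b) ≤ a ^ (n + 1) := by
  rw [geomSum₂_mul_sub]
  linarith [pow_nonneg hb (n + 1)]

end Ordered

theorem tendsto_pow_div_natCast_atTop {r : ℝ} (hr : 1 < r) :
    Tendsto (fun n : ℕ => r ^ n / n) atTop atTop := by
  have hpos : ∀ᶠ n : ℕ in atTop, (n : ℝ) ^ 1 / r ^ n ∈ Set.Ioi 0 := by
    filter_upwards [eventually_gt_atTop 0] with n hn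
    exact Set.mem_Ioi.2 (by positivity)
  simpa [Pi.inv_def, inv_div] using (tendsto_nhdsWithin_iff.2
    ⟨tendsto_pow_const_div_const_pow_of_one_lt 1 hr, hpos⟩).inv_tendsto_nhdsGT_zero

theorem tendsto_geomSum₂_div_pow_div_natCast_zero {a b : ℝ} (hb : 0 ≤ b) (hba : b < a) :
    Tendsto (fun n : ℕ => geomSum₂ b a n / a ^ (n + 1) / n) atTop (nhds 0) := by
  have ha : 0 < a := hb.trans_lt hba
  refine squeeze_zero (fun n => by have := geomSum₂_nonneg hb ha.le n; positivity)
    (fun n => div_le_div_of_nonneg_right ?_ n.cast_nonneg)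
    (tendsto_const_div_atTop_nhds_zero_nat (1 / (a - b)))
  rw [div_le_div_iff₀ (by positivity) (by linarith), one_mul]
  simpa [geomSum₂_comm b a] using geomSum₂_mul_sub_le hb n

theorem tendsto_geomSum₂_div_pow_div_natCast_atTop {a b : ℝ} (hb : 0 < b) (hba : b < a) :
    Tendsto (fun n : ℕ => geomSum₂ a b n / b ^ (n + 1) / n) atTop atTop := by
  have ha : 0 < a := hb.trans hba
  refine tendsto_atTop_mono (fun n => ?_)
    ((tendsto_pow_div_natCast_atTop ((one_lt_div hb).2 hba)).atTop_div_const hb)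
  calc (a / b) ^ n / n / b = a ^ n / b ^ (n + 1) / n := by rw [div_pow, pow_succ]; ring
    _ ≤ geomSum₂ a b n / b ^ (n + 1) / n := by
      gcongr
      exact pow_le_geomSum₂ ha.le hb.le n

theorem norm_toEuclideanCLM_single {n : Type*} [Fintype n] [DecidableEq n]
    (M : Matrix n n ℝ) (j : n) :
    ‖Matrix.toEuclideanCLM (𝕜 := ℝ) M (EuclideanSpace.single j 1)‖ = √(∑ i, M i j ^ 2) := by
  rw [show EuclideanSpace.single j (1 : ℝ) = WithLp.toLp 2 (Pi.single j 1) from rfl,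
    Matrix.toEuclideanCLM_toLp, EuclideanSpace.norm_eq]
  simp [Matrix.mulVec_single, sq_abs]

theorem fin_two_diag_pow {R : Type*} [CommRing R] (a b : R) (n : ℕ) :
    !![a, 0; 0, b] ^ n = !![a ^ n, 0; 0, b ^ n] := by
  rw [← diagonal_vec2, diagonal_pow, diagonal_fin_two]
  simp

theorem eq_pow_of_succ_eq_mul {M : Type*} [Monoid M] {x : M} {S : ℕ → M} (h0 : S 0 = 1)
    (hS : ∀ n, S (n + 1) = x * S n) (n : ℕ) : S n = x ^ n := by
  induction n with
  | zero => rw [h0, pow_zero]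
  | succ n ih => rw [hS, ih, pow_succ']

theorem derived_succ_eq {R : Type*} [CommRing R] {a b : R}
    {A B S T : ℕ → Matrix (Fin 2) (Fin 2) R}
    (hA : ∀ n, A n = !![a, 0; 0, b]) (hB : ∀ n, B n = !![0, -1; 1, 0])
    (hS : ∀ n, S n = !![a ^ n, 0; 0, b ^ n])
    (hT0 : T 0 = 0) (hT : ∀ n, T (n + 1) = B (n + 1) * S n + A (n + 1) * T n) (n : ℕ) :
    T (n + 1) = !![0, -geomSum₂ a b n; geomSum₂ b a n, 0] := by
  induction n with
  | zero =>
    rw [hT, hT0, hS, hA, hB]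
    ext i j; fin_cases i <;> fin_cases j <;> simp [geomSum₂_zero]
  | succ n ih =>
    rw [hT, ih, hS, hA, hB, mul_fin_two, mul_fin_two, geomSum₂_succ, geomSum₂_succ]
    ext i j; fin_cases i <;> fin_cases j <;> simp [add_comm]

open Filter in
/-- diagonal counterexample.  With `Aₙ = diag(α, β)`, `α > β > 0`, and
`Bₙ = R_{π/2}`, one has `S_{n+1} = diag(α^{n+1}, β^{n+1})`,
`T_{n+1} = [[0, -∑ αⁿ⁻ⁱβⁱ], [∑ βⁿ⁻ⁱαⁱ, 0]]`, and
`‖T_{n+1}e₁‖/(n‖S_{n+1}e₁‖) → 0` while `‖T_{n+1}e₂‖/(n‖S_{n+1}e₂‖) → ∞`. -/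
theorem stmt_19 (α β : ℝ) (hβ : 0 < β) (hαβ : β < α)
    (A B S T : ℕ → Matrix (Fin 2) (Fin 2) ℝ)
    (hA : ∀ n, A n = Matrix.of ![![α, 0], ![0, β]])
    (hB : ∀ n, B n = Matrix.of ![![0, -1], ![1, 0]])
    (hS0 : S 0 = 1) (hS : ∀ n, S (n + 1) = A (n + 1) * S n)
    (hT0 : T 0 = 0) (hT : ∀ n, T (n + 1) = B (n + 1) * S n + A (n + 1) * T n) :
    (∀ n, S (n + 1) = Matrix.of ![![α ^ (n + 1), 0], ![0, β ^ (n + 1)]]) ∧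
    (∀ n, T (n + 1) = Matrix.of
      ![![0, -∑ i ∈ Finset.range (n + 1), α ^ (n - i) * β ^ i],
        ![∑ i ∈ Finset.range (n + 1), β ^ (n - i) * α ^ i, 0]]) ∧
    Tendsto (fun n : ℕ =>
        (‖Matrix.toEuclideanCLM (𝕜 := ℝ) (T (n + 1)) (EuclideanSpace.single (0 : Fin 2) 1)‖
          / ‖Matrix.toEuclideanCLM (𝕜 := ℝ) (S (n + 1)) (EuclideanSpace.single (0 : Fin 2) 1)‖)
          / (n : ℝ)) atTop (nhds 0) ∧
    Tendsto (fun n : ℕ =>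
        (‖Matrix.toEuclideanCLM (𝕜 := ℝ) (T (n + 1)) (EuclideanSpace.single (1 : Fin 2) 1)‖
          / ‖Matrix.toEuclideanCLM (𝕜 := ℝ) (S (n + 1)) (EuclideanSpace.single (1 : Fin 2) 1)‖)
          / (n : ℝ)) atTop atTop := by
  have hα : 0 < α := hβ.trans hαβ
  have hSn (n : ℕ) : S n = !![α ^ n, 0; 0, β ^ n] := by
    rw [eq_pow_of_succ_eq_mul hS0 (fun n => (hS n).trans (by rw [hA])), fin_two_diag_pow]
  have hTn := derived_succ_eq hA hB hSn hT0 hT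
  refine ⟨fun n => hSn (n + 1), hTn, ?_, ?_⟩
  · refine (tendsto_geomSum₂_div_pow_div_natCast_zero hβ.le hαβ).congr fun n => ?_
    simp [hSn, hTn, norm_toEuclideanCLM_single, Real.sqrt_sq_eq_abs,
      abs_of_nonneg (geomSum₂_nonneg hβ.le hα.le n), abs_of_pos hα]
  · refine (tendsto_geomSum₂_div_pow_div_natCast_atTop hβ hαβ).congr fun n => ?_
    simp [hSn, hTn, norm_toEuclideanCLM_single, Real.sqrt_sq_eq_abs,
      abs_of_nonneg (geomSum₂_nonneg hα.le hβ.le n), abs_of_pos hβ]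
end
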